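/- Define convolved Fibonacci numbers by F_N^{(0)} = F_N and F_N^{(s)} = ∑_{j=0}^{N-1} F_{j+1} · F_{N-j}^{(s-1)} for s ≥ 1. Then for all N ≥ 1 and s ≥ 0, F_N^{(s)} = ((-i)^(N-1) / (2^s · s!)) · U_{N+s-1}^{(s)}(i/2). -/

import Mathlib

/-!
At `x = i/2` the Chebyshev recurrence `U_{n+2} = 2x U_{n+1} - U_n` becomes the Fibonacci
recurrence twisted by `i^n`, so `U_n(i/2) = i^n F_{n+1}`. Differentiating the recurrence `s + 1`
times shows that `n ↦ U_{n+s+1}^{(s+1)}` satisfies the Chebyshev recurrence forced by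
`2(s+1) U_{n+s}^{(s)}`; its solution is the convolution of `U` with that forcing term (this is
`∑ U_{n+s}^{(s)} t^n = 2^s s! / (1 - 2xt + t²)^{s+1}` read off coefficientwise). At `x = i/2`
this convolution is the one defining `F^{(s+1)}`, and induction on `s` gives the formula.
-/

/-- Convolved Fibonacci numbers: `fibConv 0 N = F_N`,
`fibConv s N = ∑_{j=0}^{N-1} F_{j+1} · fibConv (s-1) (N-j)`. -/
def fibConv : ℕ → ℕ → ℕ
  | 0, N => Nat.fib N
  | s + 1, N => ∑ j ∈ Finset.range N, Nat.fib (j + 1) * fibConv s (N - j)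

open Polynomial Polynomial.Chebyshev Finset

namespace Polynomial.Chebyshev

variable {R : Type*} [CommRing R]

theorem U_natCast_add_two (n : ℕ) : U R ↑(n + 2) = 2 * X * U R ↑(n + 1) - U R n := by
  push_cast
  exact U_add_two R n

theorem natDegree_U_natCast_le (n : ℕ) : (U R n).natDegree ≤ n := by
  rw [← map_U (Int.castRingHom R)]
  exact natDegree_map_le.trans (natDegree_U_natCast ℤ n).le

theorem iterate_derivative_U_natCast_eq_zero {n k : ℕ} (h : n < k) :
    derivative^[k] (U R n) = 0 :=
  iterate_derivative_eq_zero ((natDegree_U_natCast_le n).trans_lt h)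

theorem iterate_derivative_U_natCast_add_two (n k : ℕ) :
    derivative^[k + 1] (U R ↑(n + 2)) =
      2 * X * derivative^[k + 1] (U R ↑(n + 1)) +
        2 * ((k : R[X]) + 1) * derivative^[k] (U R ↑(n + 1)) - derivative^[k + 1] (U R n) := by
  push_cast
  rw [U_add_two, iterate_derivative_sub, mul_assoc, mul_comm X, ← C_ofNat,
    iterate_derivative_C_mul, iterate_derivative_mul_X]
  simp only [nsmul_eq_mul, Nat.cast_add_one, add_tsub_cancel_right]
  ring

theorem iterate_derivative_U_self_succ (k : ℕ) :
    derivative^[k + 1] (U R ↑(k + 1)) = 2 * ((k : R[X]) + 1) * derivative^[k] (U R k) := by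
  cases k with
  | zero => simp [U_one, ← C_ofNat]
  | succ k =>
    rw [iterate_derivative_U_natCast_add_two,
      iterate_derivative_U_natCast_eq_zero (by omega : k + 1 < k + 1 + 1),
      iterate_derivative_U_natCast_eq_zero (by omega : k < k + 1 + 1)]
    ring

theorem sum_antidiagonal_U_mul_add_two (b : ℕ → R[X]) (n : ℕ) :
    ∑ p ∈ antidiagonal (n + 2), U R p.1 * b p.2 =
      2 * X * ∑ p ∈ antidiagonal (n + 1), U R p.1 * b p.2 -
        ∑ p ∈ antidiagonal n, U R p.1 * b p.2 + b (n + 2) := by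
  simp only [Nat.sum_antidiagonal_succ (n := n + 1), Nat.sum_antidiagonal_succ (n := n),
    U_natCast_add_two, sub_mul, sum_sub_distrib, mul_add, mul_sum, mul_assoc]
  simp only [zero_add, Nat.cast_zero, Nat.cast_one, U_zero, U_one]
  ring

theorem eq_sum_antidiagonal_U_mul {a b : ℕ → R[X]} (h₀ : a 0 = b 0)
    (h₁ : a 1 = 2 * X * b 0 + b 1) (h : ∀ n, a (n + 2) = 2 * X * a (n + 1) - a n + b (n + 2))
    (n : ℕ) : a n = ∑ p ∈ antidiagonal n, U R p.1 * b p.2 := by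
  induction n using Nat.twoStepInduction with
  | zero => simp [h₀]
  | one => simp [h₁, Nat.sum_antidiagonal_succ, U_one, add_comm]
  | more n ih₀ ih₁ => rw [h, ih₀, ih₁, sum_antidiagonal_U_mul_add_two]

theorem iterate_derivative_U_succ_eq_sum (s n : ℕ) :
    derivative^[s + 1] (U R ↑(n + s + 1)) =
      2 * ((s : R[X]) + 1) * ∑ p ∈ antidiagonal n, U R p.1 * derivative^[s] (U R ↑(p.2 + s)) := by
  rw [mul_sum]
  simp_rw [mul_left_comm _ (U R _)]
  refine eq_sum_antidiagonal_U_mul (a := fun n ↦ derivative^[s + 1] (U R ↑(n + s + 1)))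
    (b := fun n ↦ 2 * ((s : R[X]) + 1) * derivative^[s] (U R ↑(n + s))) ?_ ?_ (fun n ↦ ?_) n
  · simp only [zero_add]
    exact iterate_derivative_U_self_succ s
  · simp only [zero_add, add_comm 1 s, iterate_derivative_U_natCast_add_two,
      iterate_derivative_U_self_succ, iterate_derivative_U_natCast_eq_zero (Nat.lt_succ_self s)]
    ring
  · rw [show n + 2 + s + 1 = n + s + 1 + 2 by ring, show n + 1 + s + 1 = n + s + 1 + 1 by ring,
      show n + 2 + s = n + s + 1 + 1 by ring, iterate_derivative_U_natCast_add_two]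
    ring

end Polynomial.Chebyshev

open Complex

theorem Polynomial.Chebyshev.U_natCast_eval_I_div_two (n : ℕ) :
    (U ℂ n).eval (I / 2) = I ^ n * Nat.fib (n + 1) := by
  induction n using Nat.twoStepInduction with
  | zero => simp
  | one => simp [U_one]; ring
  | more n ih₀ ih₁ =>
    rw [U_natCast_add_two, eval_sub, eval_mul, eval_mul, eval_X, eval_ofNat, ih₀, ih₁,
      Nat.fib_add_two (n := n + 1)]
    push_cast
    linear_combination (-(I ^ n * Nat.fib (n + 1))) * I_sq

theorem fibConv_succ_succ (s n : ℕ) :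
    fibConv (s + 1) (n + 1) = ∑ p ∈ antidiagonal n, Nat.fib (p.1 + 1) * fibConv s (p.2 + 1) := by
  rw [fibConv,
    Nat.sum_antidiagonal_eq_sum_range_succ (fun i j ↦ Nat.fib (i + 1) * fibConv s (j + 1))]
  refine sum_congr rfl fun j hj ↦ ?_
  rw [show n + 1 - j = n - j + 1 by have := mem_range.1 hj; omega]

theorem iterate_derivative_U_eval_I_div_two (s n : ℕ) :
    (derivative^[s] (U ℂ ↑(n + s))).eval (I / 2) =
      2 ^ s * s.factorial * I ^ n * fibConv s (n + 1) := by
  induction s generalizing n with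
  | zero => simp [fibConv, U_natCast_eval_I_div_two]
  | succ s ih =>
    rw [← add_assoc, iterate_derivative_U_succ_eq_sum, eval_mul, eval_finsetSum, fibConv_succ_succ]
    have hterm : ∀ p ∈ antidiagonal n,
        (U ℂ p.1 * derivative^[s] (U ℂ ↑(p.2 + s))).eval (I / 2) =
          2 ^ s * s.factorial * I ^ n * (Nat.fib (p.1 + 1) * fibConv s (p.2 + 1)) := by
      rintro ⟨i, j⟩ hij
      rw [HasAntidiagonal.mem_antidiagonal] at hij
      subst hij
      rw [eval_mul, U_natCast_eval_I_div_two, ih]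
      ring
    rw [sum_congr rfl hterm, ← mul_sum, Nat.factorial_succ]
    simp only [eval_mul, eval_add, eval_ofNat, eval_natCast, eval_one]
    push_cast
    ring

theorem stmt13 (N s : ℕ) (hN : 1 ≤ N) :
    (fibConv s N : ℂ) =
      (-Complex.I) ^ (N - 1) / (2 ^ s * s.factorial) *
        (Polynomial.derivative^[s] (Polynomial.Chebyshev.U ℂ (N + s - 1))).eval
          (Complex.I / 2) := by
  obtain ⟨n, rfl⟩ := Nat.exists_eq_add_of_le' hN
  have hidx : ((n + 1 : ℕ) : ℤ) + s - 1 = ↑(n + s) := by push_cast; ring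
  have hI : (-I) ^ n * I ^ n = 1 := by rw [← mul_pow, neg_mul, I_mul_I, neg_neg, one_pow]
  rw [hidx, Nat.add_sub_cancel, iterate_derivative_U_eval_I_div_two]
  have hc : (2 : ℂ) ^ s * s.factorial ≠ 0 := by simp [Nat.factorial_ne_zero]
  rw [div_mul_eq_mul_div, eq_div_iff hc]
  linear_combination (-(2 ^ s * s.factorial * fibConv s (n + 1) : ℂ)) * hI
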